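/- Let μ be a Borel probability measure and g a positive measurable function such that g^s is μ-integrable for every s > 0. Then the map p ↦ (μ(g²) − μ(g^{2/p})^p)/(p−1) is nonincreasing on (0,∞)∖{1}: for all 0 < p₁ < p₂ with p₁ ≠ 1 and p₂ ≠ 1, (μ(g²) − μ(g^{2/p₂})^{p₂})/(p₂−1) ≤ (μ(g²) − μ(g^{2/p₁})^{p₁})/(p₁−1). -/

import Mathlib

/-!
By Hölder's inequality `s ↦ log μ(g^s)` is convex on `(0, ∞)`. Hence so is its perspective
`p ↦ p log μ(g^{2/p})`, and so is the exponential of the latter, `φ p = μ(g^{2/p})^p`.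
As `φ 1 = μ(g²)`, the quotient in the statement is minus the slope of the secant of `φ`
through `1`, and secant slopes of a convex function increase.
-/

open MeasureTheory Set Real

theorem ConvexOn.perspective {f : ℝ → ℝ} (hf : ConvexOn ℝ (Ioi 0) f) {c : ℝ} (hc : 0 < c) :
    ConvexOn ℝ (Ioi 0) (fun p => p * f (c / p)) := by
  refine convexOn_iff_forall_pos.mpr ⟨convex_Ioi 0, fun x hx y hy a b ha hb hab => ?_⟩
  rw [mem_Ioi] at hx hy
  simp only [smul_eq_mul]
  set z := a * x + b * y
  have hz : 0 < z := by positivity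
  have hweights : a * x / z + b * y / z = 1 := by rw [← add_div, div_self hz.ne']
  have hcombo : a * x / z * (c / x) + b * y / z * (c / y) = c / z := by
    field_simp
    exact hab
  have hconv := hf.2 (mem_Ioi.mpr (div_pos hc hx)) (mem_Ioi.mpr (div_pos hc hy))
    (by positivity) (by positivity) hweights
  simp only [smul_eq_mul, hcombo] at hconv
  calc z * f (c / z)
      ≤ z * (a * x / z * f (c / x) + b * y / z * f (c / y)) := by gcongr
    _ = a * (x * f (c / x)) + b * (y * f (c / y)) := by field_simp

theorem ConvexOn.exp {E : Type*} [AddCommMonoid E] [Module ℝ E] {s : Set E} {f : E → ℝ}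
    (hf : ConvexOn ℝ s f) : ConvexOn ℝ s (fun x => exp (f x)) :=
  ⟨hf.1, fun _ hx _ hy _ _ ha hb hab => (exp_le_exp.2 (hf.2 hx hy ha hb hab)).trans
    (convexOn_exp.2 (mem_univ _) (mem_univ _) ha hb hab)⟩

section Moments

variable {Ω : Type*} [MeasurableSpace Ω] {μ : Measure Ω}

theorem MeasureTheory.Integrable.memLp_rpow {f : Ω → ℝ} (hf : Integrable f μ) (hf0 : 0 ≤ᵐ[μ] f)
    {c : ℝ} (hc : 0 < c) : MemLp (fun x => f x ^ c) (ENNReal.ofReal (1 / c)) μ := by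
  have hnorm := (memLp_one_iff_integrable.mpr hf).norm_rpow_div (ENNReal.ofReal c)
  rw [ENNReal.toReal_ofReal hc.le, ← ENNReal.ofReal_one, ← ENNReal.ofReal_div_of_pos hc] at hnorm
  refine hnorm.ae_eq ?_
  filter_upwards [hf0] with x hx
  rw [Real.norm_of_nonneg hx]

theorem integral_rpow_mul_rpow_le {f h : Ω → ℝ} (hf0 : 0 ≤ᵐ[μ] f) (hh0 : 0 ≤ᵐ[μ] h)
    (hf : Integrable f μ) (hh : Integrable h μ) {a b : ℝ} (ha : 0 < a) (hb : 0 < b)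
    (hab : a + b = 1) :
    ∫ x, f x ^ a * h x ^ b ∂μ ≤ (∫ x, f x ∂μ) ^ a * (∫ x, h x ∂μ) ^ b := by
  have rpow_inv : ∀ {k : Ω → ℝ} {c : ℝ}, 0 ≤ᵐ[μ] k → 0 < c →
      ∫ x, (k x ^ c) ^ (1 / c) ∂μ = ∫ x, k x ∂μ := by
    intro k c hk0 hc
    refine integral_congr_ae ?_
    filter_upwards [hk0] with x hx
    rw [← Real.rpow_mul hx, mul_one_div_cancel hc.ne', Real.rpow_one]
  have holder := integral_mul_le_Lp_mul_Lq_of_nonneg (Real.holderConjugate_one_div ha hb hab)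
    (hf0.mono fun x hx => Real.rpow_nonneg hx a) (hh0.mono fun x hx => Real.rpow_nonneg hx b)
    (hf.memLp_rpow hf0 ha) (hh.memLp_rpow hh0 hb)
  rwa [rpow_inv hf0 ha, rpow_inv hh0 hb, one_div_one_div, one_div_one_div] at holder

variable {g : Ω → ℝ}

theorem integral_rpow_pos [NeZero μ] (hg : ∀ x, 0 < g x) {s : ℝ}
    (hint : Integrable (fun x => g x ^ s) μ) : 0 < ∫ x, g x ^ s ∂μ := by
  have hsupp : Function.support (fun x => g x ^ s) = univ :=
    Function.support_eq_univ fun x => (Real.rpow_pos_of_pos (hg x) s).ne'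
  rw [integral_pos_iff_support_of_nonneg (fun x => (Real.rpow_pos_of_pos (hg x) s).le) hint,
    hsupp, Measure.measure_univ_pos]
  exact NeZero.ne μ

theorem convexOn_log_integral_rpow [NeZero μ] (hg : ∀ x, 0 < g x)
    (hint : ∀ s : ℝ, 0 < s → Integrable (fun x => g x ^ s) μ) :
    ConvexOn ℝ (Ioi 0) (fun s : ℝ => log (∫ x, g x ^ s ∂μ)) := by
  refine convexOn_iff_forall_pos.mpr ⟨convex_Ioi 0, fun s hs t ht a b ha hb hab => ?_⟩
  rw [mem_Ioi] at hs ht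
  simp only [smul_eq_mul]
  have hIs := integral_rpow_pos hg (hint s hs)
  have hIt := integral_rpow_pos hg (hint t ht)
  have hsplit : ∫ x, g x ^ (a * s + b * t) ∂μ = ∫ x, (g x ^ s) ^ a * (g x ^ t) ^ b ∂μ := by
    refine integral_congr_ae (Filter.Eventually.of_forall fun x => ?_)
    simp only
    rw [← Real.rpow_mul (hg x).le, ← Real.rpow_mul (hg x).le, ← Real.rpow_add (hg x),
      mul_comm s, mul_comm t]
  have holder := integral_rpow_mul_rpow_le
    (Filter.Eventually.of_forall fun x => (Real.rpow_pos_of_pos (hg x) s).le)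
    (Filter.Eventually.of_forall fun x => (Real.rpow_pos_of_pos (hg x) t).le)
    (hint s hs) (hint t ht) ha hb hab
  rw [← hsplit] at holder
  rw [← Real.log_rpow hIs, ← Real.log_rpow hIt, ← Real.log_mul (by positivity) (by positivity)]
  exact Real.log_le_log (integral_rpow_pos hg (hint _ (by positivity))) holder

theorem convexOn_integral_rpow_div_rpow [NeZero μ] (hg : ∀ x, 0 < g x)
    (hint : ∀ s : ℝ, 0 < s → Integrable (fun x => g x ^ s) μ) {c : ℝ} (hc : 0 < c) :
    ConvexOn ℝ (Ioi 0) (fun p => (∫ x, g x ^ (c / p) ∂μ) ^ p) := by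
  refine ((convexOn_log_integral_rpow hg hint).perspective hc).exp.congr fun p hp => ?_
  rw [Real.rpow_def_of_pos (integral_rpow_pos hg (hint _ (div_pos hc hp))), mul_comm]

end Moments

theorem beckner_functional_antitone
    {Ω : Type*} [MeasurableSpace Ω] (μ : Measure Ω) [IsProbabilityMeasure μ]
    (g : Ω → ℝ) (hgpos : ∀ x, 0 < g x)
    (hint : ∀ s : ℝ, 0 < s → Integrable (fun x => g x ^ s) μ) :
    ∀ p₁ p₂ : ℝ, 0 < p₁ → p₁ < p₂ → p₁ ≠ 1 → p₂ ≠ 1 →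
      ((∫ x, g x ^ (2 : ℝ) ∂μ) - (∫ x, g x ^ (2 / p₂) ∂μ) ^ p₂) / (p₂ - 1) ≤
        ((∫ x, g x ^ (2 : ℝ) ∂μ) - (∫ x, g x ^ (2 / p₁) ∂μ) ^ p₁) / (p₁ - 1) := by
  intro p₁ p₂ hp₁ hlt hp₁1 hp₂1
  have hsecant := (convexOn_integral_rpow_div_rpow hgpos hint two_pos).secant_mono
    (mem_Ioi.mpr one_pos) (mem_Ioi.mpr hp₁) (mem_Ioi.mpr (hp₁.trans hlt)) hp₁1 hp₂1 hlt.le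
  simp only [div_one, rpow_one] at hsecant
  rw [← neg_sub, neg_div, ← neg_sub ((∫ x, g x ^ (2 / p₁) ∂μ) ^ p₁), neg_div]
  exact neg_le_neg hsecant
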